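/- Let S′ be the set of pairs (f, (p,q)) where f is an integer-matrix binary quartic form over ℤ with Δ(f) ≠ 0, 48 ∣ I(f), and 1728 ∣ J(f), and (p,q) ∈ ℤ² with f(p,q) = 1, with the equivalence relation (f, (p,q)) ∼ (f′, (p′,q′)) iff there exists g ∈ SL₂(ℤ) with f′(X,Y) = f((X,Y)·g) and (p,q) = (p′,q′)·g. Then the map sending (A, B, x₀, y₀) to the equivalence class of ( X⁴ − 6x₀X²Y² + 8y₀XY³ + (−4A − 3x₀²)Y⁴, (1,0) ) is a bijection from {(A, B, x₀, y₀) ∈ ℤ⁴ : Δ_{A,B} ≠ 0 and y₀² = x₀³ + Ax₀ + B} onto S′/∼. -/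
import Mathlib


/-- A binary quartic form `aX⁴ + bX³Y + cX²Y² + dXY³ + eY⁴` over `ℤ`, encoded by its
coefficient tuple `(a, b, c, d, e)`. -/
abbrev BQ : Type := ℤ × ℤ × ℤ × ℤ × ℤ

/-- Evaluation of a binary quartic form at `(x, y)`. -/
def evalBQ (f : BQ) (x y : ℤ) : ℤ :=
  f.1 * x ^ 4 + f.2.1 * x ^ 3 * y + f.2.2.1 * x ^ 2 * y ^ 2 +
    f.2.2.2.1 * x * y ^ 3 + f.2.2.2.2 * y ^ 4

/-- A binary quartic form over `ℤ` is integer-matrix if `4 ∣ b`, `6 ∣ c` and `4 ∣ d`. -/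
def IsIntegerMatrixBQ (f : BQ) : Prop :=
  4 ∣ f.2.1 ∧ 6 ∣ f.2.2.1 ∧ 4 ∣ f.2.2.2.1

/-- The invariant `I = 12ae − 3bd + c²` of a binary quartic form over `ℤ`. -/
def IBQ (f : BQ) : ℤ :=
  12 * f.1 * f.2.2.2.2 - 3 * f.2.1 * f.2.2.2.1 + f.2.2.1 ^ 2

/-- The invariant `J = 72ace − 27ad² − 27b²e + 9bcd − 2c³` of a binary quartic over `ℤ`. -/
def JBQ (f : BQ) : ℤ :=
  72 * f.1 * f.2.2.1 * f.2.2.2.2 - 27 * f.1 * f.2.2.2.1 ^ 2 - 27 * f.2.1 ^ 2 * f.2.2.2.2 +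
    9 * f.2.1 * f.2.2.1 * f.2.2.2.1 - 2 * f.2.2.1 ^ 3

/-- The discriminant `Δ(f) = (4I(f)³ − J(f)²)/27` of a binary quartic form over `ℤ`. -/
def discBQ (f : BQ) : ℚ :=
  (4 * (IBQ f : ℚ) ^ 3 - (JBQ f : ℚ) ^ 2) / 27

/-- The set `S′` of pairs `(f, (p,q))` with `f` an integer-matrix binary quartic form with
`Δ(f) ≠ 0`, `48 ∣ I(f)`, `1728 ∣ J(f)`, and `f(p,q) = 1`. -/
def Sprime : Set (BQ × (ℤ × ℤ)) :=
  {x | IsIntegerMatrixBQ x.1 ∧ discBQ x.1 ≠ 0 ∧ 48 ∣ IBQ x.1 ∧ 1728 ∣ JBQ x.1 ∧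
    evalBQ x.1 x.2.1 x.2.2 = 1}

/-- `(f,(p,q)) ∼ (f′,(p′,q′))` iff there is `g = (α β; γ δ) ∈ SL₂(ℤ)` with
`f′(X,Y) = f((X,Y)·g) = f(αX + γY, βX + δY)` and `(p,q) = (p′,q′)·g`. -/
def relBQ (x x' : BQ × (ℤ × ℤ)) : Prop :=
  ∃ g : Matrix (Fin 2) (Fin 2) ℤ, g.det = 1 ∧
    (∀ X Y : ℤ, evalBQ x'.1 X Y = evalBQ x.1 (g 0 0 * X + g 1 0 * Y) (g 0 1 * X + g 1 1 * Y)) ∧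
    x.2.1 = g 0 0 * x'.2.1 + g 1 0 * x'.2.2 ∧
    x.2.2 = g 0 1 * x'.2.1 + g 1 1 * x'.2.2

/-- Integral affine Weierstrass models `y² = x³ + Ax + B` with `Δ_{A,B} ≠ 0`, together
with an integral point `(x₀, y₀)`; encoded as quadruples `(A, B, x₀, y₀)`. -/
def modelsWithPoint : Set (ℤ × ℤ × ℤ × ℤ) :=
  {q | -16 * (4 * q.1 ^ 3 + 27 * q.2.1 ^ 2) ≠ 0 ∧
    q.2.2.2 ^ 2 = q.2.2.1 ^ 3 + q.1 * q.2.2.1 + q.2.1}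

/-- The map `(A,B,x₀,y₀) ↦ (X⁴ − 6x₀X²Y² + 8y₀XY³ + (−4A − 3x₀²)Y⁴, (1,0))`. -/
def PsiBQ (q : ℤ × ℤ × ℤ × ℤ) : BQ × (ℤ × ℤ) :=
  ((1, 0, -6 * q.2.2.1, 8 * q.2.2.2, -4 * q.1 - 3 * q.2.2.1 ^ 2), (1, 0))

lemma relBQ_refl (x : BQ × (ℤ × ℤ)) : relBQ x x := by
  refine ⟨!![1, 0; 0, 1], by simp [Matrix.det_fin_two_of], ?_, by simp, by simp⟩
  intro X Y; simp

lemma relBQ_symm {x x' : BQ × (ℤ × ℤ)} (h : relBQ x x') : relBQ x' x := by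
  obtain ⟨g, hdet, hev, hp, hq⟩ := h
  rw [Matrix.det_fin_two] at hdet
  refine ⟨!![g 1 1, -(g 0 1); -(g 1 0), g 0 0], by simp [Matrix.det_fin_two_of]; linarith, ?_, ?_, ?_⟩
  · intro X Y
    simp only [Matrix.cons_val', Matrix.cons_val_zero, Matrix.empty_val',
      Matrix.cons_val_fin_one, Matrix.cons_val_one, Matrix.head_cons, Matrix.head_fin_const,
      Matrix.of_apply, Matrix.cons_val_fin_one]
    rw [hev]
    have e1 : g 0 0 * (g 1 1 * X + -(g 1 0) * Y) + g 1 0 * (-(g 0 1) * X + g 0 0 * Y) = X := by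
      linear_combination X * hdet
    have e2 : g 0 1 * (g 1 1 * X + -(g 1 0) * Y) + g 1 1 * (-(g 0 1) * X + g 0 0 * Y) = Y := by
      linear_combination Y * hdet
    rw [e1, e2]
  · simp only [Matrix.cons_val', Matrix.cons_val_zero, Matrix.empty_val',
      Matrix.cons_val_fin_one, Matrix.cons_val_one, Matrix.head_cons, Matrix.head_fin_const,
      Matrix.of_apply]
    rw [hp, hq]; linear_combination -x'.2.1 * hdet
  · simp only [Matrix.cons_val', Matrix.cons_val_zero, Matrix.empty_val',
      Matrix.cons_val_fin_one, Matrix.cons_val_one, Matrix.head_cons, Matrix.head_fin_const,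
      Matrix.of_apply]
    rw [hp, hq]; linear_combination -x'.2.2 * hdet

lemma relBQ_trans {x x' x'' : BQ × (ℤ × ℤ)} (h : relBQ x x') (h' : relBQ x' x'') :
    relBQ x x'' := by
  obtain ⟨g, hdet, hev, hp, hq⟩ := h
  obtain ⟨g', hdet', hev', hp', hq'⟩ := h'
  rw [Matrix.det_fin_two] at hdet hdet'
  refine ⟨!![g 0 0 * g' 0 0 + g 1 0 * g' 0 1, g 0 1 * g' 0 0 + g 1 1 * g' 0 1;
            g 0 0 * g' 1 0 + g 1 0 * g' 1 1, g 0 1 * g' 1 0 + g 1 1 * g' 1 1], ?_, ?_, ?_, ?_⟩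
  · rw [Matrix.det_fin_two_of]
    linear_combination (g' 0 0 * g' 1 1 - g' 0 1 * g' 1 0) * hdet + hdet'
  · intro X Y
    simp only [Matrix.cons_val', Matrix.cons_val_zero, Matrix.empty_val',
      Matrix.cons_val_fin_one, Matrix.cons_val_one, Matrix.head_cons, Matrix.head_fin_const,
      Matrix.of_apply]
    rw [hev' X Y, hev]
    congr 1 <;> ring
  · simp only [Matrix.cons_val', Matrix.cons_val_zero, Matrix.empty_val',
      Matrix.cons_val_fin_one, Matrix.cons_val_one, Matrix.head_cons, Matrix.head_fin_const,
      Matrix.of_apply]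
    rw [hp, hp', hq']; ring
  · simp only [Matrix.cons_val', Matrix.cons_val_zero, Matrix.empty_val',
      Matrix.cons_val_fin_one, Matrix.cons_val_one, Matrix.head_cons, Matrix.head_fin_const,
      Matrix.of_apply]
    rw [hq, hp', hq']; ring

def transBQ (f : BQ) (p q r s : ℤ) : BQ :=
  (evalBQ f p q,
   4*f.1*p^3*r + f.2.1*(3*p^2*q*r + p^3*s) + 2*f.2.2.1*p*q*(q*r+p*s)
     + f.2.2.2.1*(q^3*r + 3*p*q^2*s) + 4*f.2.2.2.2*q^3*s,
   6*f.1*p^2*r^2 + 3*f.2.1*p*r*(q*r+p*s) + f.2.2.1*(p^2*s^2 + 4*p*q*r*s + q^2*r^2)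
     + 3*f.2.2.2.1*q*s*(p*s+q*r) + 6*f.2.2.2.2*q^2*s^2,
   4*f.1*p*r^3 + f.2.1*(3*p*r^2*s + q*r^3) + 2*f.2.2.1*r*s*(p*s+q*r)
     + f.2.2.2.1*(p*s^3 + 3*q*r*s^2) + 4*f.2.2.2.2*q*s^3,
   evalBQ f r s)

lemma evalBQ_trans (f : BQ) (p q r s X Y : ℤ) :
    evalBQ (transBQ f p q r s) X Y = evalBQ f (p*X + r*Y) (q*X + s*Y) := by
  simp only [transBQ, evalBQ]; ring

lemma IBQ_trans (f : BQ) (p q r s : ℤ) :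
    IBQ (transBQ f p q r s) = (p*s - q*r)^4 * IBQ f := by
  simp only [transBQ, IBQ, evalBQ]; ring

lemma JBQ_trans (f : BQ) (p q r s : ℤ) :
    JBQ (transBQ f p q r s) = (p*s - q*r)^6 * JBQ f := by
  simp only [transBQ, JBQ, evalBQ]; ring

lemma eight_dvd (n : ℤ) (h : 64 ∣ n^2) : 8 ∣ n := by
  have h82 : (8:ℤ)^2 ∣ n^2 := by norm_num; exact h
  exact (Int.pow_dvd_pow_iff (by norm_num)).mp h82

lemma part4BQ : ∀ x ∈ Sprime, ∃ q ∈ modelsWithPoint, relBQ x (PsiBQ q) := by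
  rintro ⟨⟨a, b, c, d, e⟩, P, Q⟩ ⟨⟨hb4, hc6, hd4⟩, hdisc, hI, hJ, hev1⟩
  obtain ⟨b0, rfl⟩ := hb4
  obtain ⟨c0, rfl⟩ := hc6
  obtain ⟨d0, rfl⟩ := hd4
  simp only [evalBQ] at hev1
  set r : ℤ := -(e*Q^3) with hr
  set s : ℤ := a*P^3 + 4*b0*P^2*Q + 6*c0*P*Q^2 + 4*d0*Q^3 with hs
  have hrs : P*s - Q*r = 1 := by rw [hr, hs]; linear_combination hev1
  set F : BQ := (a, 4*b0, 6*c0, 4*d0, e) with hF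
  set f1 := transBQ F P Q r s with hf1
  have ha1 : f1.1 = 1 := by rw [hf1]; show evalBQ F P Q = 1; rw [hF]; exact hev1
  have hb1 : 4 ∣ f1.2.1 := by
    refine ⟨a*P^3*r + b0*(3*P^2*Q*r + P^3*s) + 3*c0*P*Q*(Q*r+P*s)
      + d0*(Q^3*r + 3*P*Q^2*s) + e*Q^3*s, ?_⟩
    rw [hf1, hF]; simp only [transBQ]; ring
  have hc1 : 6 ∣ f1.2.2.1 := by
    refine ⟨a*P^2*r^2 + 2*b0*P*r*(Q*r+P*s) + c0*(P^2*s^2 + 4*P*Q*r*s + Q^2*r^2)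
      + 2*d0*Q*s*(P*s+Q*r) + e*Q^2*s^2, ?_⟩
    rw [hf1, hF]; simp only [transBQ]; ring
  obtain ⟨u, hu⟩ := hb1
  set f2 := transBQ f1 1 0 (-u) 1 with hf2
  have ha2 : f2.1 = 1 := by
    rw [hf2]; show evalBQ f1 1 0 = 1
    simp [evalBQ, ha1]
  have hb2 : f2.2.1 = 0 := by
    have h : f2.2.1 = f1.2.1 - 4*f1.1*u := by rw [hf2]; simp only [transBQ]; ring
    rw [h, hu, ha1]; ring
  have hc2eq : f2.2.2.1 = f1.2.2.1 - 3*f1.2.1*u + 6*f1.1*u^2 := by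
    rw [hf2]; simp only [transBQ]; ring
  have hc2 : 6 ∣ f2.2.2.1 := by
    obtain ⟨v1, hv1⟩ := hc1
    exact ⟨v1 - 2*u^2 + u^2, by rw [hc2eq, hv1, hu, ha1]; ring⟩
  obtain ⟨v, hv⟩ := hc2
  have hI2 : IBQ f2 = IBQ F := by
    rw [hf2, IBQ_trans, hf1, IBQ_trans, hrs]; ring
  have hJ2 : JBQ f2 = JBQ F := by
    rw [hf2, JBQ_trans, hf1, JBQ_trans, hrs]; ring
  have hI48 : 48 ∣ IBQ f2 := hI2 ▸ hI
  have hJ1728 : 1728 ∣ JBQ f2 := hJ2 ▸ hJ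
  have hIval : IBQ f2 = 12 * f2.2.2.2.2 + 36 * v^2 := by
    simp only [IBQ]; rw [ha2, hb2, hv]; ring
  obtain ⟨m, hm'⟩ : ∃ m, f2.2.2.2.2 = 4*m - 3*v^2 := by
    obtain ⟨k, hk⟩ := hI48
    exact ⟨k, by rw [hIval] at hk; linarith⟩
  have hJval : JBQ f2 = 432*v*f2.2.2.2.2 - 27*f2.2.2.2.1^2 - 432*v^3 := by
    simp only [JBQ]; rw [ha2, hb2, hv]; ring
  have hd8 : 8 ∣ f2.2.2.2.1 := by
    apply eight_dvd
    obtain ⟨j, hj⟩ := hJ1728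
    refine ⟨v*(m - v^2) - j, ?_⟩
    rw [hJval, hm'] at hj
    have h27 : 27 * (f2.2.2.2.1^2 - 64*(v*(m - v^2) - j)) = 0 := by linear_combination -hj
    linarith
  obtain ⟨w, hw⟩ := hd8
  set B : ℤ := w^2 + v^3 - m*v with hB
  have hIm : IBQ F = 48 * m := by rw [← hI2, hIval, hm']; ring
  have hJm : JBQ F = -1728 * B := by rw [← hJ2, hJval, hm', hw, hB]; ring
  refine ⟨(-m, B, -v, w), ⟨?_, by simp only []; ring⟩, ?_⟩
  · -- discriminant nonzero
    intro h0
    apply hdisc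
    simp only [Prod.fst, Prod.snd] at h0
    have h16 : (16:ℤ)*(-4*m^3 + 27*B^2) = 0 := by linear_combination -h0
    have hz : (-4*m^3 + 27*B^2 : ℤ) = 0 := by linarith
    show discBQ F = 0
    rw [discBQ, hIm, hJm, div_eq_zero_iff]
    left
    have : ((-4*m^3 + 27*B^2 : ℤ) : ℚ) = 0 := by exact_mod_cast hz
    push_cast at this ⊢
    linear_combination (-110592 : ℚ) * this
  · -- the relation
    refine ⟨!![P, Q; r - u*P, s - u*Q], ?_, ?_, ?_, ?_⟩
    · rw [Matrix.det_fin_two_of]; linear_combination hrs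
    · intro X Y
      have hform : (PsiBQ (-m, B, -v, w)).1 = f2 := by
        have h2 : f2 = (f2.1, f2.2.1, f2.2.2.1, f2.2.2.2.1, f2.2.2.2.2) := rfl
        rw [h2]
        simp only [PsiBQ, Prod.mk.injEq]
        refine ⟨ha2.symm, hb2.symm, by rw [hv]; ring, by rw [hw], by rw [hm']; ring⟩
      rw [hform, hf2, evalBQ_trans, hf1, evalBQ_trans]
      simp only [Matrix.cons_val', Matrix.cons_val_zero, Matrix.empty_val',
        Matrix.cons_val_fin_one, Matrix.cons_val_one, Matrix.head_cons, Matrix.head_fin_const,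
        Matrix.of_apply]
      rw [hF]
      congr 1 <;> ring
    · simp [PsiBQ]
    · simp [PsiBQ]

lemma part2BQ : ∀ q ∈ modelsWithPoint, PsiBQ q ∈ Sprime := by
  rintro ⟨A, B, x0, y0⟩ ⟨hΔ, hpt⟩
  simp only [modelsWithPoint, Set.mem_setOf_eq] at hpt
  have hI : IBQ (PsiBQ (A, B, x0, y0)).1 = -48 * A := by
    simp only [PsiBQ, IBQ]; ring
  have hJ : JBQ (PsiBQ (A, B, x0, y0)).1 = -1728 * B := by
    simp only [PsiBQ, JBQ]; linear_combination -1728 * hpt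
  refine ⟨⟨⟨0, by simp [PsiBQ]⟩, ⟨-x0, by simp [PsiBQ]⟩, ⟨2*y0, by simp [PsiBQ]; ring⟩⟩,
    ?_, ⟨-A, by rw [hI]; ring⟩, ⟨-B, by rw [hJ]; ring⟩, by simp [PsiBQ, evalBQ]⟩
  -- disc ≠ 0
  have h4 : (4 * A ^ 3 + 27 * B ^ 2 : ℤ) ≠ 0 := by
    intro h; exact hΔ (by rw [h]; ring)
  simp only [discBQ, hI, hJ]
  intro h
  rw [div_eq_zero_iff] at h
  rcases h with h | h
  · apply h4
    have : ((4 * A ^ 3 + 27 * B ^ 2 : ℤ) : ℚ) = 0 := by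
      push_cast at h ⊢
      linear_combination (-1/110592 : ℚ) * h
    exact_mod_cast this
  · norm_num at h

lemma part3BQ : ∀ q ∈ modelsWithPoint, ∀ q' ∈ modelsWithPoint,
    relBQ (PsiBQ q) (PsiBQ q') → q = q' := by
  rintro ⟨A, B, x0, y0⟩ ⟨_, hpt⟩ ⟨A', B', x0', y0'⟩ ⟨_, hpt'⟩ ⟨g, hdet, hev, hp, hq⟩
  simp only [modelsWithPoint, Set.mem_setOf_eq] at hpt hpt'
  simp only [PsiBQ, mul_one, mul_zero, add_zero] at hp hq
  rw [Matrix.det_fin_two] at hdet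
  -- g 0 0 = 1, g 0 1 = 0, g 1 1 = 1
  have h00 : g 0 0 = 1 := hp.symm
  have h01 : g 0 1 = 0 := hq.symm
  have h11 : g 1 1 = 1 := by rw [h00, h01] at hdet; linarith
  set γ := g 1 0 with hγ
  have H : ∀ X Y : ℤ,
      X^4 - 6*x0'*X^2*Y^2 + 8*y0'*X*Y^3 + (-4*A' - 3*x0'^2)*Y^4
      = (X + γ*Y)^4 - 6*x0*(X + γ*Y)^2*Y^2 + 8*y0*(X + γ*Y)*Y^3 + (-4*A - 3*x0^2)*Y^4 := by
    intro X Y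
    have := hev X Y
    rw [h00, h01, h11] at this
    simp only [PsiBQ, evalBQ] at this
    linear_combination this
  have hb : (24 : ℤ) * γ = 0 := by
    linear_combination (H 1 0) * 12 - 3*(H 0 1) + 3*(H 1 1) + (H (-1) 1) - (H 2 1)
  have hγ0 : γ = 0 := by linarith
  rw [hγ0] at H
  have hc : 2*(-6*x0' + 6*x0) = 0 := by
    linear_combination (H 1 1) + (H (-1) 1) - 2*(H 1 0) - 2*(H 0 1)
  have hx : x0 = x0' := by linarith
  have hd : 2*(8*y0' - 8*y0) = 0 := by
    linear_combination (H 1 1) - (H (-1) 1)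
  have hy : y0 = y0' := by linarith
  have he : -4*A' - 3*x0'^2 = -4*A - 3*x0^2 := by linear_combination H 0 1
  have hA : A = A' := by rw [← hx] at he; linarith
  have hB : B = B' := by
    rw [← hx, ← hy, ← hA] at hpt'
    linarith
  rw [hx, hy, hA, hB]


/-- `∼` is an equivalence relation on `S′`, and the map sending `(A, B, x₀, y₀)` to the
class of `(X⁴ − 6x₀X²Y² + 8y₀XY³ + (−4A − 3x₀²)Y⁴, (1,0))` is a bijection from the set of
integral Weierstrass models with an integral point onto `S′/∼`. -/
theorem models_bijection_with_Sprime :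
    Equivalence (fun a b : ↥Sprime => relBQ a.1 b.1) ∧
    (∀ q ∈ modelsWithPoint, PsiBQ q ∈ Sprime) ∧
    (∀ q ∈ modelsWithPoint, ∀ q' ∈ modelsWithPoint, relBQ (PsiBQ q) (PsiBQ q') → q = q') ∧
    (∀ x ∈ Sprime, ∃ q ∈ modelsWithPoint, relBQ x (PsiBQ q)) := by
  exact ⟨⟨fun a => relBQ_refl a.1, fun h => relBQ_symm h, fun h h' => relBQ_trans h h'⟩,
    part2BQ, part3BQ, part4BQ⟩
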